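/- arXiv:1811.10133 — 2 statements merged into one kernel-verified Lean document; each statement's English description precedes it below -/
import Mathlib

section
/- Let X ∈ ℂ^{n×n} be Hermitian positive semidefinite with eigenvalues λ₁(X) ≥ ⋯ ≥ λₙ(X), let N ≤ n, and let Φ = { P ∈ ℂ^{n×n} : P Hermitian, 0 ⪯ P ⪯ I, trace(P) = n − N }. Then for every P ∈ Φ, trace(P·X) ≥ Σ_{i=N+1}^{n} λᵢ(X), i.e., trace(P·X) ≥ trace(X) − Σ_{i=1}^{N} λᵢ(X). -/
/-!
Diagonalize `X = U diag(λ) Uᴴ`. Then `tr(P X) = ∑ⱼ dⱼ λⱼ` with `dⱼ` the diagonal entries of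
`Uᴴ P U`; the bounds `0 ⪯ P ⪯ 1` and `tr P = n - N` make these weights lie in `[0, 1]` and sum
to `n - N`. Among such weightings of the decreasingly ordered eigenvalues, `∑ⱼ dⱼ λⱼ` is smallest
when all the weight sits on the `n - N` smallest ones.
-/

open Matrix ComplexOrder

theorem Finset.sum_le_sum_mul_of_threshold {ι : Type*} [Fintype ι] [DecidableEq ι] (S : Finset ι)
    (μ c : ι → ℝ) (t : ℝ) (hc : ∀ i, c i ∈ Set.Icc 0 1)
    (hsum : ∑ i, c i = S.card) (hS : ∀ i ∈ S, μ i ≤ t) (hSc : ∀ i ∉ S, t ≤ μ i) :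
    ∑ i ∈ S, μ i ≤ ∑ i, μ i * c i := by
  have hin : ∑ i ∈ S, (μ i - t) ≤ ∑ i ∈ S, (μ i - t) * c i :=
    Finset.sum_le_sum fun i hi => by nlinarith [hS i hi, (hc i).1, (hc i).2]
  have hout : 0 ≤ ∑ i ∈ Sᶜ, (μ i - t) * c i :=
    Finset.sum_nonneg fun i hi =>
      mul_nonneg (sub_nonneg.2 (hSc i (Finset.mem_compl.1 hi))) (hc i).1
  have hsplit := Finset.sum_add_sum_compl S fun i => (μ i - t) * c i
  simp only [sub_mul, Finset.sum_sub_distrib, ← Finset.mul_sum, hsum, Finset.sum_const,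
    nsmul_eq_mul] at hin hout hsplit
  linarith

theorem Fin.card_filter_le_val (n N : ℕ) :
    (Finset.univ.filter fun i : Fin n => N ≤ (i : ℕ)).card = n - N := by
  have := Finset.card_filter_add_card_filter_not (s := Finset.univ) fun i : Fin n => (i : ℕ) < N
  simp only [Fin.card_filter_val_lt, not_lt, Finset.card_univ, Fintype.card_fin] at this
  omega

theorem Fin.map_castLEEmb_univ {n N : ℕ} (hN : N ≤ n) :
    Finset.univ.map (Fin.castLEEmb hN) = (Finset.univ.filter fun i : Fin n => N ≤ (i : ℕ))ᶜ := by
  ext i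
  simp only [Finset.mem_map, Finset.mem_univ, true_and, Finset.mem_compl, Finset.mem_filter,
    not_le]
  exact Set.ext_iff.1 (Fin.range_castLE hN) i

theorem Fin.sum_castLE_add_sum_filter_le_val {M : Type*} [AddCommMonoid M] {n N : ℕ}
    (hN : N ≤ n) (f : Fin n → M) :
    ∑ i : Fin N, f (Fin.castLE hN i) + ∑ i ∈ Finset.univ.filter (fun i : Fin n => N ≤ (i : ℕ)), f i
      = ∑ i, f i := by
  rw [add_comm, ← Finset.sum_add_sum_compl (Finset.univ.filter fun i : Fin n => N ≤ (i : ℕ)),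
    ← Fin.map_castLEEmb_univ hN, Finset.sum_map]
  rfl

theorem Antitone.sum_filter_le_val_le_sum_mul {n N : ℕ} {μ : Fin n → ℝ} (hμ : Antitone μ)
    (c : Fin n → ℝ) (hc : ∀ i, c i ∈ Set.Icc 0 1) (hsum : ∑ i, c i = (n - N : ℕ)) :
    ∑ i ∈ Finset.univ.filter (fun i : Fin n => N ≤ (i : ℕ)), μ i ≤ ∑ i, μ i * c i := by
  obtain ⟨t, hhi, hlo⟩ : ∃ t, (∀ i : Fin n, N ≤ (i : ℕ) → μ i ≤ t) ∧
      (∀ i : Fin n, ¬ N ≤ (i : ℕ) → t ≤ μ i) := by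
    rcases lt_or_ge N n with h | h
    · exact ⟨μ ⟨N, h⟩, fun i hi => hμ (Fin.le_def.2 hi),
        fun i hi => hμ (Fin.le_def.2 (by simp only; omega))⟩
    · exact ⟨⨅ i, μ i, fun i hi => absurd i.isLt (by omega),
        fun i _ => ciInf_le (Finite.bddBelow_range μ) i⟩
  refine Finset.sum_le_sum_mul_of_threshold _ μ c t hc ?_ (by simpa using hhi)
    (by simpa using hlo)
  rw [hsum, Fin.card_filter_le_val]

namespace Matrix

variable {m 𝕜 : Type*} [DecidableEq m] [RCLike 𝕜]

theorem PosSemidef.re_diag_mem_Icc {A : Matrix m m 𝕜} (h0 : A.PosSemidef)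
    (h1 : (1 - A).PosSemidef) (i : m) : RCLike.re (A i i) ∈ Set.Icc 0 1 := by
  have h0i := RCLike.nonneg_iff.1 (h0.diag_nonneg (i := i))
  have h1i := RCLike.nonneg_iff.1 (h1.diag_nonneg (i := i))
  simp only [sub_apply, one_apply_eq, map_sub, RCLike.one_re] at h1i
  exact ⟨h0i.1, sub_nonneg.1 h1i.1⟩

variable [Fintype m]

theorem PosSemidef.star_mul_mul_unitary {A : Matrix m m 𝕜} (hA : A.PosSemidef)
    (U : unitary (Matrix m m 𝕜)) : (star (U : Matrix m m 𝕜) * A * U).PosSemidef := by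
  simpa only [star_eq_conjTranspose] using hA.conjTranspose_mul_mul_same (U : Matrix m m 𝕜)

theorem one_sub_star_mul_mul_unitary (A : Matrix m m 𝕜) (U : unitary (Matrix m m 𝕜)) :
    1 - star (U : Matrix m m 𝕜) * A * U = star (U : Matrix m m 𝕜) * (1 - A) * U := by
  simp [mul_sub, sub_mul]

theorem trace_star_mul_mul_unitary (A : Matrix m m 𝕜) (U : unitary (Matrix m m 𝕜)) :
    (star (U : Matrix m m 𝕜) * A * U).trace = A.trace := by
  rw [trace_mul_cycle, Unitary.mul_star_self_of_mem U.2, one_mul]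

theorem IsHermitian.re_trace_mul_eq_sum {B : Matrix m m 𝕜} (hB : B.IsHermitian)
    (A : Matrix m m 𝕜) :
    RCLike.re (A * B).trace = ∑ j,
      RCLike.re ((star (hB.eigenvectorUnitary : Matrix m m 𝕜) * A * hB.eigenvectorUnitary) j j)
        * hB.eigenvalues j := by
  conv_lhs => rw [hB.spectral_theorem, Unitary.conjStarAlgAut_apply, ← mul_assoc, ← mul_assoc,
    trace_mul_cycle, ← mul_assoc]
  simp [trace, mul_diagonal]

theorem IsHermitian.exists_weights_re_trace_mul_eq_sum {A B : Matrix m m 𝕜} (hB : B.IsHermitian)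
    (h0 : A.PosSemidef) (h1 : (1 - A).PosSemidef) :
    ∃ d : m → ℝ, (∀ j, d j ∈ Set.Icc 0 1) ∧ ∑ j, d j = RCLike.re A.trace ∧
      RCLike.re (A * B).trace = ∑ j, d j * hB.eigenvalues j := by
  set U := hB.eigenvectorUnitary
  refine ⟨fun j => RCLike.re ((star (U : Matrix m m 𝕜) * A * U) j j),
    (h0.star_mul_mul_unitary U).re_diag_mem_Icc
      (one_sub_star_mul_mul_unitary A U ▸ h1.star_mul_mul_unitary U), ?_,
    hB.re_trace_mul_eq_sum A⟩
  rw [← trace_star_mul_mul_unitary A U, trace, map_sum]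
  rfl

end Matrix

theorem stmt9_general {n N : ℕ} (hN : N ≤ n) (X : Matrix (Fin n) (Fin n) ℂ)
    (hX : X.PosSemidef) (μ : Fin n → ℝ)
    (hmono : ∀ i j : Fin n, i ≤ j → μ j ≤ μ i)
    (hperm : ∃ e : Equiv.Perm (Fin n), ∀ i, μ i = hX.1.eigenvalues (e i))
    (P : Matrix (Fin n) (Fin n) ℂ)
    (hP0 : P.PosSemidef) (hPI : (1 - P).PosSemidef)
    (hPtr : P.trace = ((n - N : ℕ) : ℂ)) :
    (∑ i ∈ Finset.univ.filter (fun i : Fin n => N ≤ (i : ℕ)), μ i ≤ ((P * X).trace).re)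
    ∧ X.trace.re - ∑ i : Fin N, μ (Fin.castLE hN i) ≤ ((P * X).trace).re := by
  obtain ⟨e, he⟩ := hperm
  obtain ⟨d, hd, hdsum, hPX⟩ := hX.1.exists_weights_re_trace_mul_eq_sum hP0 hPI
  have hdsum_perm : ∑ i, d (e i) = (n - N : ℕ) := by
    rw [Equiv.sum_comp e d, hdsum, hPtr]
    exact Complex.natCast_re _
  have hPX_perm : ((P * X).trace).re = ∑ i, μ i * d (e i) := by
    refine hPX.trans ?_
    rw [← Equiv.sum_comp e]
    simp [he, mul_comm]
  have hXtr : X.trace.re = ∑ i, μ i := by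
    rw [hX.1.trace_eq_sum_eigenvalues, Complex.re_sum, ← Equiv.sum_comp e]
    simp [he]
  have key : ∑ i ∈ Finset.univ.filter (fun i : Fin n => N ≤ (i : ℕ)), μ i ≤ ((P * X).trace).re :=
    hPX_perm ▸ Antitone.sum_filter_le_val_le_sum_mul hmono _ (fun i => hd (e i)) hdsum_perm
  exact ⟨key, by linarith [Fin.sum_castLE_add_sum_filter_le_val hN μ]⟩

/-- Ky Fan-type lower bound: for PSD X with decreasingly ordered
eigenvalues μ, N ≤ n, and any Hermitian P with 0 ⪯ P ⪯ I and trace(P) = n − N,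
trace(P·X) ≥ Σ_{i=N+1}^{n} μ_i = trace(X) − Σ_{i=1}^{N} μ_i. -/
theorem stmt9 {n N : ℕ} (hN : N ≤ n) (X : Matrix (Fin n) (Fin n) ℂ)
    (hX : X.PosSemidef) (μ : Fin n → ℝ)
    (hmono : ∀ i j : Fin n, i ≤ j → μ j ≤ μ i)
    (hperm : ∃ e : Equiv.Perm (Fin n), ∀ i, μ i = hX.1.eigenvalues (e i))
    (P : Matrix (Fin n) (Fin n) ℂ) (hPH : P.IsHermitian)
    (hP0 : P.PosSemidef) (hPI : (1 - P).PosSemidef)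
    (hPtr : P.trace = ((n - N : ℕ) : ℂ)) :
    (∑ i ∈ Finset.univ.filter (fun i : Fin n => N ≤ (i : ℕ)), μ i ≤ ((P * X).trace).re)
    ∧ X.trace.re - ∑ i : Fin N, μ (Fin.castLE hN i) ≤ ((P * X).trace).re :=
  stmt9_general hN X hX μ hmono hperm P hP0 hPI hPtr
end

section
/- Let X ∈ ℂ^{n×n} be Hermitian positive semidefinite and let N ≤ n. Then trace(X) − Σ_{i=1}^{N} λᵢ(X) = min { trace(P·X) : P Hermitian, 0 ⪯ P ⪯ I, trace(P) = n − N }, and the minimum is attained. -/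
/-!
Diagonalise `X = V diag(μ) Vᴴ` with `V` unitary. For a feasible `P`, the diagonal `r` of `Vᴴ P V`
lies in `[0, 1]`, sums to `tr P = n - N`, and `tr (P X) = ∑ rᵢ μᵢ`. Against the indicator `s` of the
`n - N` smallest eigenvalues and a threshold `t` separating them from the others,
`(rᵢ - sᵢ) (μᵢ - t) ≥ 0` termwise, whence `∑ rᵢ μᵢ ≥ ∑ sᵢ μᵢ`; the spectral projection
`V diag(s) Vᴴ` attains this bound.
-/

open Matrix ComplexOrder Finset

theorem Fin.mem_map_castLEEmb_univ {N n : ℕ} (hN : N ≤ n) {i : Fin n} :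
    i ∈ univ.map (castLEEmb hN) ↔ (i : ℕ) < N := by
  simp [← Set.mem_range, Fin.range_castLE]

theorem Finset.sum_le_sum_mul_of_sum_eq_card {ι : Type*} [Fintype ι] {S : Finset ι}
    {μ r : ι → ℝ} (hμ : ∀ i ∈ S, ∀ j ∉ S, μ i ≤ μ j) (hr₀ : ∀ i, 0 ≤ r i)
    (hr₁ : ∀ i, r i ≤ 1) (hr : ∑ i, r i = #S) :
    ∑ i ∈ S, μ i ≤ ∑ i, r i * μ i := by
  classical
  rcases S.eq_empty_or_nonempty with rfl | hS
  · have hr_eq_zero : ∀ i, r i = 0 := by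
      simpa [sum_eq_zero_iff_of_nonneg fun i _ ↦ hr₀ i] using hr
    simp [hr_eq_zero]
  set t := S.sup' hS μ
  set s : ι → ℝ := fun i ↦ if i ∈ S then 1 else 0
  have hs : ∑ i, s i = #S := by simp [s]
  have hsign : ∀ i, 0 ≤ (r i - s i) * (μ i - t) := by
    intro i
    by_cases hi : i ∈ S
    · have : μ i ≤ t := S.le_sup' μ hi
      have := hr₁ i
      simp only [s, hi, if_true]
      nlinarith
    · have : t ≤ μ i := S.sup'_le hS μ fun k hk ↦ hμ k hk i hi
      have := hr₀ i
      simp only [s, hi, if_false]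
      nlinarith
  calc ∑ i ∈ S, μ i = ∑ i, s i * μ i := by simp [s, sum_ite_mem]
    _ ≤ ∑ i, s i * μ i + ∑ i, (r i - s i) * (μ i - t) :=
        le_add_of_nonneg_right (sum_nonneg fun i _ ↦ hsign i)
    _ = ∑ i, r i * μ i - ∑ i, (r i - s i) * t := by
        rw [← sum_add_distrib, ← sum_sub_distrib]
        exact sum_congr rfl fun i _ ↦ by ring
    _ = ∑ i, r i * μ i := by
        rw [← sum_mul, sum_sub_distrib, hr, hs, sub_self, zero_mul, sub_zero]

namespace Matrix

variable {ι : Type*} [Fintype ι] [DecidableEq ι] {X V : Matrix ι ι ℂ} {μ : ι → ℝ}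

theorem trace_mul_eq_sum_of_eq_conj_diagonal
    (hX : X = V * diagonal (fun i ↦ (μ i : ℂ)) * Vᴴ) (P : Matrix ι ι ℂ) :
    (P * X).trace = ∑ i, (Vᴴ * P * V) i i * μ i := by
  rw [hX, ← Matrix.mul_assoc, ← Matrix.mul_assoc, trace_mul_cycle, ← Matrix.mul_assoc]
  simp [trace, mul_diagonal]

theorem trace_eq_sum_of_eq_conj_diagonal (hV : V ∈ unitaryGroup ι ℂ)
    (hX : X = V * diagonal (fun i ↦ (μ i : ℂ)) * Vᴴ) :
    X.trace = ∑ i, (μ i : ℂ) := by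
  simpa [← star_eq_conjTranspose, mem_unitaryGroup_iff'.mp hV] using
    trace_mul_eq_sum_of_eq_conj_diagonal hX 1

theorem sum_le_re_trace_mul_of_eq_conj_diagonal (hV : V ∈ unitaryGroup ι ℂ)
    (hX : X = V * diagonal (fun i ↦ (μ i : ℂ)) * Vᴴ) {S : Finset ι}
    (hμ : ∀ i ∈ S, ∀ j ∉ S, μ i ≤ μ j) {P : Matrix ι ι ℂ} (hP₀ : P.PosSemidef)
    (hP₁ : (1 - P).PosSemidef) (hP : P.trace = S.card) :
    ∑ i ∈ S, μ i ≤ (P * X).trace.re := by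
  set Q := Vᴴ * P * V
  have hQ₀ : Q.PosSemidef := hP₀.conjTranspose_mul_mul_same V
  have hQ₁ : (1 - Q).PosSemidef := by
    have : 1 - Q = Vᴴ * (1 - P) * V := by
      simp [Q, Matrix.mul_sub, Matrix.sub_mul, ← star_eq_conjTranspose, mem_unitaryGroup_iff'.mp hV]
    simpa [this] using hP₁.conjTranspose_mul_mul_same V
  have hQ : Q.trace = P.trace := by
    simp [Q, trace_mul_cycle, ← star_eq_conjTranspose, mem_unitaryGroup_iff.mp hV]
  rw [trace_mul_eq_sum_of_eq_conj_diagonal hX, Complex.re_sum]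
  simp only [Complex.re_mul_ofReal]
  refine Finset.sum_le_sum_mul_of_sum_eq_card hμ (fun i ↦ ?_) (fun i ↦ ?_) ?_
  · exact (Complex.le_def.mp hQ₀.diag_nonneg).1
  · simpa using (Complex.le_def.mp (hQ₁.diag_nonneg (i := i))).1
  · simpa [trace, Complex.re_sum] using congrArg Complex.re (hQ.trans hP)

theorem exists_re_trace_mul_eq_sum_of_eq_conj_diagonal (hV : V ∈ unitaryGroup ι ℂ)
    (hX : X = V * diagonal (fun i ↦ (μ i : ℂ)) * Vᴴ) (S : Finset ι) :
    ∃ P : Matrix ι ι ℂ, P.PosSemidef ∧ (1 - P).PosSemidef ∧ P.trace = S.card ∧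
      (P * X).trace.re = ∑ i ∈ S, μ i := by
  set d : ι → ℂ := fun i ↦ if i ∈ S then 1 else 0
  have hVV : Vᴴ * V = 1 := by simpa [← star_eq_conjTranspose] using mem_unitaryGroup_iff'.mp hV
  refine ⟨V * diagonal d * Vᴴ, ?_, ?_, ?_, ?_⟩
  · exact (posSemidef_diagonal_iff.mpr fun i ↦ by by_cases hi : i ∈ S <;> simp [d, hi])
      |>.mul_mul_conjTranspose_same V
  · have : 1 - V * diagonal d * Vᴴ = V * diagonal (1 - d) * Vᴴ := by
      rw [show diagonal (1 - d) = 1 - diagonal d by ext i j; by_cases h : i = j <;> simp [h],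
        Matrix.mul_sub, Matrix.sub_mul, Matrix.mul_one,
        ← star_eq_conjTranspose, mem_unitaryGroup_iff.mp hV]
    rw [this]
    exact (posSemidef_diagonal_iff.mpr fun i ↦ by by_cases hi : i ∈ S <;> simp [d, hi])
      |>.mul_mul_conjTranspose_same V
  · simp [trace_mul_cycle, hVV, d]
  · rw [trace_mul_eq_sum_of_eq_conj_diagonal hX, Complex.re_sum]
    simp only [← Matrix.mul_assoc, hVV, Matrix.one_mul]
    rw [Matrix.mul_assoc, hVV, Matrix.mul_one]
    simp [d, apply_ite Complex.re, sum_ite_mem]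

theorem isLeast_re_trace_mul_of_eq_conj_diagonal (hV : V ∈ unitaryGroup ι ℂ)
    (hX : X = V * diagonal (fun i ↦ (μ i : ℂ)) * Vᴴ) {S : Finset ι}
    (hμ : ∀ i ∈ S, ∀ j ∉ S, μ i ≤ μ j) :
    IsLeast { t : ℝ | ∃ P : Matrix ι ι ℂ, P.IsHermitian ∧ P.PosSemidef ∧ (1 - P).PosSemidef
        ∧ P.trace = S.card ∧ t = (P * X).trace.re } (∑ i ∈ S, μ i) := by
  refine ⟨?_, ?_⟩
  · obtain ⟨P, hP₀, hP₁, hP, hPX⟩ := exists_re_trace_mul_eq_sum_of_eq_conj_diagonal hV hX S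
    exact ⟨P, hP₀.isHermitian, hP₀, hP₁, hP, hPX.symm⟩
  · rintro _ ⟨P, -, hP₀, hP₁, hP, rfl⟩
    exact sum_le_re_trace_mul_of_eq_conj_diagonal hV hX hμ hP₀ hP₁ hP

theorem IsHermitian.exists_unitary_eq_conj_diagonal {X : Matrix ι ι ℂ} (hX : X.IsHermitian)
    (e : Equiv.Perm ι) :
    ∃ V ∈ unitaryGroup ι ℂ,
      X = V * diagonal (fun i ↦ (hX.eigenvalues (e i) : ℂ)) * Vᴴ := by
  set U : Matrix ι ι ℂ := ↑hX.eigenvectorUnitary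
  refine ⟨U.submatrix id e, ?_, ?_⟩
  · rw [mem_unitaryGroup_iff', star_eq_conjTranspose, conjTranspose_submatrix,
      ← submatrix_mul _ _ _ _ _ Function.bijective_id, ← star_eq_conjTranspose,
      Unitary.coe_star_mul_self]
    exact submatrix_one_equiv e
  · conv_lhs => rw [hX.spectral_theorem, Unitary.conjStarAlgAut_apply]
    rw [show (fun i ↦ (hX.eigenvalues (e i) : ℂ)) = (RCLike.ofReal ∘ hX.eigenvalues) ∘ e from rfl,
      ← submatrix_diagonal_equiv, conjTranspose_submatrix, submatrix_mul_equiv, submatrix_mul_equiv,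
      submatrix_id_id, star_eq_conjTranspose]

end Matrix

/-- Ky Fan identity: for PSD X with decreasingly ordered
eigenvalues μ and N ≤ n,
trace(X) − Σ_{i=1}^{N} μ_i = min { trace(P·X) : P Hermitian, 0 ⪯ P ⪯ I,
trace(P) = n − N }, and the minimum is attained. -/
theorem stmt11 {n N : ℕ} (hN : N ≤ n) (X : Matrix (Fin n) (Fin n) ℂ)
    (hX : X.PosSemidef) (μ : Fin n → ℝ)
    (hmono : ∀ i j : Fin n, i ≤ j → μ j ≤ μ i)
    (hperm : ∃ e : Equiv.Perm (Fin n), ∀ i, μ i = hX.1.eigenvalues (e i)) :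
    IsLeast { t : ℝ | ∃ P : Matrix (Fin n) (Fin n) ℂ,
        P.IsHermitian ∧ P.PosSemidef ∧ (1 - P).PosSemidef
        ∧ P.trace = ((n - N : ℕ) : ℂ) ∧ t = ((P * X).trace).re }
      (X.trace.re - ∑ i : Fin N, μ (Fin.castLE hN i)) := by
  obtain ⟨e, he⟩ := hperm
  obtain ⟨V, hV, hXV⟩ := hX.1.exists_unitary_eq_conj_diagonal e
  simp only [← he] at hXV
  set T := univ.map (Fin.castLEEmb hN)
  have hcard : #Tᶜ = n - N := by simp [T, card_compl]
  have hval : X.trace.re - ∑ i : Fin N, μ (Fin.castLE hN i) = ∑ i ∈ Tᶜ, μ i := by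
    rw [Matrix.trace_eq_sum_of_eq_conj_diagonal hV hXV, ← Complex.ofReal_sum, Complex.ofReal_re,
      ← sum_add_sum_compl T, sum_map]
    simp [T]
  rw [hval, ← hcard]
  refine Matrix.isLeast_re_trace_mul_of_eq_conj_diagonal hV hXV fun i hi j hj ↦ hmono _ _ ?_
  rw [mem_compl, Fin.mem_map_castLEEmb_univ] at hi
  rw [notMem_compl, Fin.mem_map_castLEEmb_univ] at hj
  exact Fin.le_iff_val_le_val.mpr (by omega)
end
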